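/- Let G be a comonad on a category E and (P, σ) an oplax morphism of comonads G → G, with Q : E_G → E_G the corresponding lifted functor satisfying U_G ∘ Q = P ∘ U_G. Then for any initial P-algebra (W, s) in E, there exists a unique initial Q-algebra (W', s') in E_G such that U_G W' = W and U_G s' = s. -/

import Mathlib

open CategoryTheory CategoryTheory.Limits

universe v u

variable {E : Type u} [Category.{v} E]

/-- `(S, σ)` is an oplax morphism of comonads `G → H`. -/
def IsOplaxMorphism {F : Type*} [Category F] (G : Comonad E) (H : Comonad F) (S : E ⥤ F)
    (σ : G.toFunctor ⋙ S ⟶ S ⋙ H.toFunctor) : Prop :=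
  (∀ X : E, σ.app X ≫ H.ε.app (S.obj X) = S.map (G.ε.app X)) ∧
  (∀ X : E, σ.app X ≫ H.δ.app (S.obj X) =
      S.map (G.δ.app X) ≫ σ.app (G.obj X) ≫ H.map (σ.app X))

/-! The oplax morphism `σ` lifts `G` to a comonad `Ĝ(X, s) = (GX, σ_X ≫ Gs)` on `P`-algebras,
and algebras of the lifted functor `Q` on `G`-coalgebras are literally the same data as `Ĝ`-coalgebras
(a carrier with a `P`-algebra and a compatible `G`-coalgebra structure), so the two categories are
isomorphic. In any category with a comonad, the unique map from an initial object `I` to `Ĝ I` is a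
coalgebra structure, the only one on `I`, and it makes `I` the initial coalgebra. -/

theorem CategoryTheory.Endofunctor.Algebra.ext_of_heq {F : E ⥤ E} {A B : Algebra F}
    (h : A.a = B.a) (h' : HEq A.str B.str) : A = B := by
  cases A; cases B; cases h; cases h'; rfl

namespace CategoryTheory.Comonad

theorem Coalgebra.ext_of_heq {G : Comonad E} {A B : G.Coalgebra} (h : A.A = B.A)
    (h' : HEq A.a B.a) : A = B := by
  cases A; cases B; cases h; cases h'; rfl

section

variable (K : Comonad E) {I : E} (hI : IsInitial I)

def coalgebraOfIsInitial : K.Coalgebra where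
  A := I
  a := hI.to (K.obj I)
  counit := hI.hom_ext _ _
  coassoc := hI.hom_ext _ _

def isInitialCoalgebraOfIsInitial : IsInitial (K.coalgebraOfIsInitial hI) :=
  IsInitial.ofUniqueHom (fun A => ⟨hI.to A.A, hI.hom_ext _ _⟩)
    fun _ _ => Coalgebra.Hom.ext (hI.hom_ext _ _)

end

theorem Coalgebra.eq_coalgebraOfIsInitial {K : Comonad E} (A : K.Coalgebra) (hA : IsInitial A.A) :
    A = K.coalgebraOfIsInitial hA := by
  obtain ⟨A, a, _, _⟩ := A
  congr
  exact hA.hom_ext _ _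

end CategoryTheory.Comonad

namespace IsOplaxMorphism

section

variable {F : Type*} [Category F] {G : Comonad E} {H : Comonad F} {S : E ⥤ F}
  {σ : G.toFunctor ⋙ S ⟶ S ⋙ H.toFunctor} (hσ : IsOplaxMorphism G H S σ)

def coalgebraFunctor : G.Coalgebra ⥤ H.Coalgebra where
  obj A :=
    { A := S.obj A.A
      a := S.map A.a ≫ σ.app A.A
      counit := by rw [Category.assoc, hσ.1, ← S.map_comp, A.counit, S.map_id]
      coassoc := by
        have nat : σ.app A.A ≫ H.map (S.map A.a) = S.map (G.map A.a) ≫ σ.app (G.obj A.A) :=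
          (σ.naturality A.a).symm
        rw [Category.assoc, hσ.2, ← S.map_comp_assoc, A.coassoc, S.map_comp_assoc, H.map_comp,
          Category.assoc, reassoc_of% nat] }
  map {X Y} f :=
    { f := S.map f.f
      h := by
        have nat : σ.app X.A ≫ H.map (S.map f.f) = S.map (G.map f.f) ≫ σ.app Y.A :=
          (σ.naturality f.f).symm
        dsimp only
        rw [Category.assoc, nat, ← S.map_comp_assoc, f.h, S.map_comp_assoc] }

theorem eq_coalgebraFunctor {Q : G.Coalgebra ⥤ H.Coalgebra} (hQ : Q ⋙ H.forget = G.forget ⋙ S)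
    (hQobj : ∀ A : G.Coalgebra,
      (Q.obj A).A = S.obj A.A ∧ HEq (Q.obj A).a (S.map A.a ≫ σ.app A.A)) :
    Q = hσ.coalgebraFunctor := by
  refine CategoryTheory.Functor.ext
    (fun A => Comonad.Coalgebra.ext_of_heq (hQobj A).1 (hQobj A).2) fun A B f => ?_
  apply H.forget.map_injective
  rw [Functor.map_comp, Functor.map_comp, eqToHom_map, eqToHom_map]
  exact Functor.congr_hom hQ f

end

variable {G : Comonad E} {P : E ⥤ E} {σ : G.toFunctor ⋙ P ⟶ P ⋙ G.toFunctor}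
  (hσ : IsOplaxMorphism G G P σ)

def algebraComonad : Comonad (Endofunctor.Algebra P) where
  obj X := ⟨G.obj X.a, σ.app X.a ≫ G.map X.str⟩
  map {X Y} f :=
    { f := G.map f.f
      h := by
        have nat : P.map (G.map f.f) ≫ σ.app Y.a = σ.app X.a ≫ G.map (P.map f.f) :=
          σ.naturality f.f
        rw [reassoc_of% nat, ← G.map_comp, f.h, G.map_comp, Category.assoc] }
  map_id X := Endofunctor.Algebra.ext (G.map_id X.a)
  map_comp f g := Endofunctor.Algebra.ext (G.map_comp f.f g.f)
  ε :=
    { app X :=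
        { f := G.ε.app X.a
          h := by
            dsimp only [Functor.id_obj]
            rw [Category.assoc, G.counit_naturality, ← Category.assoc, hσ.1] }
      naturality _ _ f := Endofunctor.Algebra.ext (G.ε.naturality f.f) }
  δ :=
    { app X :=
        { f := G.δ.app X.a
          h := by
            dsimp only [Functor.comp_obj]
            rw [Category.assoc, G.delta_naturality, reassoc_of% (hσ.2 X.a),
              Functor.map_comp] }
      naturality _ _ f := Endofunctor.Algebra.ext (G.δ.naturality f.f) }
  coassoc X := Endofunctor.Algebra.ext (G.coassoc X.a)
  left_counit X := Endofunctor.Algebra.ext (G.left_counit X.a)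
  right_counit X := Endofunctor.Algebra.ext (G.right_counit X.a)

def algebraToCoalgebra :
    Endofunctor.Algebra hσ.coalgebraFunctor ⥤ hσ.algebraComonad.Coalgebra where
  obj A :=
    { A := ⟨A.a.A, A.str.f⟩
      a := ⟨A.a.a, (Category.assoc _ _ _).symm.trans A.str.h⟩
      counit := Endofunctor.Algebra.ext A.a.counit
      coassoc := Endofunctor.Algebra.ext A.a.coassoc }
  map m :=
    { f := ⟨m.f.f, congrArg Comonad.Coalgebra.Hom.f m.h⟩
      h := Endofunctor.Algebra.ext m.f.h }

instance : hσ.algebraToCoalgebra.Full where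
  map_surjective g :=
    ⟨⟨⟨g.f.f, congrArg Endofunctor.Algebra.Hom.f g.h⟩, Comonad.Coalgebra.Hom.ext g.f.h⟩, rfl⟩

instance : hσ.algebraToCoalgebra.Faithful where
  map_injective h :=
    Endofunctor.Algebra.ext (Comonad.Coalgebra.Hom.ext (congrArg (fun g => g.f.f) h))

def algebraOfCoalgebra (C : hσ.algebraComonad.Coalgebra) :
    Endofunctor.Algebra hσ.coalgebraFunctor where
  a :=
    { A := C.A.a
      a := C.a.f
      counit := congrArg Endofunctor.Algebra.Hom.f C.counit
      coassoc := congrArg Endofunctor.Algebra.Hom.f C.coassoc }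
  str := ⟨C.A.str, (Category.assoc _ _ _).trans C.a.h⟩

end IsOplaxMorphism

/-- given an oplax morphism of comonads `(P, σ) : G → G` with lifted endofunctor
`Q` on `E_G` (so `U_G ∘ Q = P ∘ U_G` and `Q(A, α) = (PA, σ A ∘ Pα)`), every initial
`P`-algebra `(W, s)` in `E` lifts to a unique initial `Q`-algebra `(W', s')` in `E_G` with
`U_G W' = W` and `U_G s' = s`. -/
theorem initial_algebra_lifts_to_coalgebras (G : Comonad E) (P : E ⥤ E)
    (σ : G.toFunctor ⋙ P ⟶ P ⋙ G.toFunctor) (hσ : IsOplaxMorphism G G P σ)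
    (Q : G.Coalgebra ⥤ G.Coalgebra) (hQ : Q ⋙ G.forget = G.forget ⋙ P)
    (hQobj : ∀ A : G.Coalgebra,
      (Q.obj A).A = P.obj A.A ∧ HEq (Q.obj A).a (P.map A.a ≫ σ.app A.A))
    (W : Endofunctor.Algebra P) (hW : Nonempty (IsInitial W)) :
    ∃! W' : Endofunctor.Algebra Q,
      (W'.a.A = W.a ∧ HEq W'.str.f W.str) ∧ Nonempty (IsInitial W') := by
  obtain rfl := hσ.eq_coalgebraFunctor hQ hQobj
  obtain ⟨hI⟩ := hW
  let C := hσ.algebraComonad.coalgebraOfIsInitial hI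
  refine ⟨hσ.algebraOfCoalgebra C, ⟨⟨rfl, HEq.rfl⟩, ⟨?_⟩⟩, ?_⟩
  · exact IsInitial.isInitialOfObj hσ.algebraToCoalgebra _
      (hσ.algebraComonad.isInitialCoalgebraOfIsInitial hI)
  · rintro W'' ⟨⟨hcarrier, hstr⟩, -⟩
    obtain rfl : (hσ.algebraToCoalgebra.obj W'').A = W :=
      Endofunctor.Algebra.ext_of_heq hcarrier hstr
    exact congrArg hσ.algebraOfCoalgebra (Comonad.Coalgebra.eq_coalgebraOfIsInitial _ hI)
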